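/- Let the process be φ-mixing. Let n ∈ ℕ, let A ∈ 𝒞^n be an n-cylinder with ℙ(A) > 0, set f_A = 1/(2ℙ(A)), and let k ≥ 1 be an integer. Then for every real r with 0 ≤ r ≤ f_A, |ℙ_A(τ_A > k f_A + r) − ℙ_A(τ_A > k f_A) ℙ(τ_A > r)| ≤ 2 ε(A) ℙ_A(τ_A > k f_A − 2n). -/

import Mathlib

open MeasureTheory ProbabilityTheory Set Filter ENNReal

namespace ReturnTimes

variable {𝒞 : Type*}

/-- Bi-infinite sequences over the alphabet `𝒞`. -/
abbrev Omega (𝒞 : Type*) := ℤ → 𝒞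

/-- The shift `T^k`: `(shiftk k x) m = x (m + k)`.  Thus `T = shiftk 1` and
`T^{-k} A = shiftk k ⁻¹' A`. -/
def shiftk (k : ℤ) (x : Omega 𝒞) : Omega 𝒞 := fun m => x (m + k)

/-- Stationarity: `ℙ` is invariant under the shift. -/
def Stationary [MeasurableSpace 𝒞] (μ : MeasureTheory.Measure (Omega 𝒞)) : Prop :=
  ∀ S : Set (Omega 𝒞), μ (shiftk 1 ⁻¹' S) = μ S

/-- The `n`-cylinder `A = {X_0 = a_0, …, X_{n-1} = a_{n-1}}` given by the word `a`. -/
def cyl (n : ℕ) (a : ℕ → 𝒞) : Set (Omega 𝒞) := {x | ∀ i < n, x (i : ℤ) = a i}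

/-- `A^{(w)} = {X_{n-w} = a_{n-w}, …, X_{n-1} = a_{n-1}}`, the cylinder on the last `w`
symbols of the word `a` (equal to `univ` when `w = 0`). -/
def cylLast (n w : ℕ) (a : ℕ → 𝒞) : Set (Omega 𝒞) :=
  {x | ∀ i : ℕ, n - w ≤ i → i < n → x (i : ℤ) = a i}

/-- The event `{τ_A > t}` for a real `t`, where `τ_A(x) = inf {k ≥ 1 : T^k x ∈ A}`. -/
def tauGT (A : Set (Omega 𝒞)) (t : ℝ) : Set (Omega 𝒞) :=
  {x | ∀ k : ℕ, 1 ≤ k → (k : ℝ) ≤ t → shiftk (k : ℤ) x ∉ A}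

/-- The hitting time `τ_A(x) = inf {k ≥ 1 : T^k x ∈ A}`, with values in `ℕ∞`
(`⊤` if the point never hits `A`). -/
noncomputable def tau (A : Set (Omega 𝒞)) (x : Omega 𝒞) : ℕ∞ :=
  sInf {e : ℕ∞ | ∃ k : ℕ, e = (k : ℕ∞) ∧ 1 ≤ k ∧ shiftk (k : ℤ) x ∈ A}

/-- The period `p_A = min {k ∈ {1,…,n} : A ∩ T^{-k} A ≠ ∅}`. -/
noncomputable def period (n : ℕ) (A : Set (Omega 𝒞)) : ℕ :=
  sInf {k : ℕ | 1 ≤ k ∧ k ≤ n ∧ (A ∩ shiftk (k : ℤ) ⁻¹' A).Nonempty}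

/-- The secondary periods `ℛ(A) = {k ∈ {⌊n/p_A⌋ p_A + 1, …, n-1} : A ∩ T^{-k} A ≠ ∅}`. -/
noncomputable def secondary (n : ℕ) (A : Set (Omega 𝒞)) : Set ℕ :=
  {k : ℕ | (n / period n A) * period n A < k ∧ k < n ∧ (A ∩ shiftk (k : ℤ) ⁻¹' A).Nonempty}

open Classical in
/-- `n_A = min ℛ(A)` if `ℛ(A) ≠ ∅`, and `n_A = n` otherwise. -/
noncomputable def nA (n : ℕ) (A : Set (Omega 𝒞)) : ℕ :=
  if (secondary n A).Nonempty then sInf (secondary n A) else n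

/-- The σ-algebra `ℱ_I` generated by the coordinates with indices in `I`. -/
def coordAlg [MeasurableSpace 𝒞] (I : Set ℤ) : MeasurableSpace (Omega 𝒞) :=
  ⨆ i ∈ I, MeasurableSpace.comap (fun x : Omega 𝒞 => x i) inferInstance

/-- φ-mixing: `φ l` bounds `|ℙ_B(C) - ℙ(C)|` for all `B ∈ ℱ_{{0,…,n}}` with `ℙ(B) > 0`
and all `C ∈ ℱ_{{m : m ≥ n + l + 1}}`, and `φ l → 0` as `l → ∞`. -/
def IsPhiMixing [MeasurableSpace 𝒞] (μ : MeasureTheory.Measure (Omega 𝒞)) (φ : ℕ → ℝ) : Prop :=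
  Tendsto φ atTop (nhds 0) ∧
  ∀ (l n : ℕ) (B C : Set (Omega 𝒞)),
    MeasurableSet[coordAlg (Set.Icc (0 : ℤ) (n : ℤ))] B → 0 < μ B →
    MeasurableSet[coordAlg {i : ℤ | (n : ℤ) + (l : ℤ) + 1 ≤ i}] C →
    |(μ[|B] C).toReal - (μ C).toReal| ≤ φ l

/-- `ζ_A = ℙ_A(τ_A ≠ p_A)`. -/
noncomputable def zeta [MeasurableSpace 𝒞] (μ : MeasureTheory.Measure (Omega 𝒞)) (n : ℕ)
    (A : Set (Omega 𝒞)) : ℝ :=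
  (μ[|A] {x | tau A x ≠ (period n A : ℕ∞)}).toReal

/-- `ε(A) = inf_{0 ≤ w ≤ n_A} [(2n + p_A) ℙ(A^{(w)}) + φ(n_A - w)]`. -/
noncomputable def epsA [MeasurableSpace 𝒞] (μ : MeasureTheory.Measure (Omega 𝒞)) (φ : ℕ → ℝ)
    (n : ℕ) (a : ℕ → 𝒞) : ℝ :=
  (Finset.Iic (nA n (cyl n a))).inf' Finset.nonempty_Iic
    (fun w => ((2 * n + period n (cyl n a) : ℕ) : ℝ) * (μ (cylLast n w a)).toReal
       + φ (nA n (cyl n a) - w))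

/-- `f(A,t) = ℙ(A) t e^{-(ζ_A - 16 ε(A)) ℙ(A) t}`. -/
noncomputable def fAt [MeasurableSpace 𝒞] (μ : MeasureTheory.Measure (Omega 𝒞)) (φ : ℕ → ℝ)
    (n : ℕ) (a : ℕ → 𝒞) (t : ℝ) : ℝ :=
  (μ (cyl n a)).toReal * t *
    Real.exp (-(zeta μ n (cyl n a) - 16 * epsA μ φ n a) * (μ (cyl n a)).toReal * t)

/-- The sojourn time `S_A(x) = sup {k : x ∈ A ∩ T^{-j p_A} A for all j = 1,…,k}` (here `p`
stands for the period `p_A`), with values in `ℕ∞` and `S_A(x) = 0` when the set is empty. -/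
noncomputable def sojourn (p : ℕ) (A : Set (Omega 𝒞)) (x : Omega 𝒞) : ℕ∞ :=
  sSup {e : ℕ∞ | ∃ k : ℕ, e = (k : ℕ∞) ∧
    ∀ j : ℕ, 1 ≤ j → j ≤ k → x ∈ A ∩ shiftk ((j * p : ℕ) : ℤ) ⁻¹' A}

/-- `ρ_i(A) = ℙ(A | ∩_{j=1}^{i} T^{j p_A} A)` (here `p` stands for the period `p_A`;
note `T^{j} A = shiftk (-j) ⁻¹' A` since `T` is invertible). -/
noncomputable def rho [MeasurableSpace 𝒞] (μ : MeasureTheory.Measure (Omega 𝒞)) (p : ℕ)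
    (A : Set (Omega 𝒞)) (i : ℕ) : ℝ :=
  (μ[| ⋂ j ∈ Finset.Icc 1 i, shiftk (-((j * p : ℕ) : ℤ)) ⁻¹' A] A).toReal


/-!
Write `N(u, v)` for the event that the orbit avoids `A` at all times `u, …, v`, and let
`m = ⌊k f_A⌋`, `G = n + g` with `g = n_A - w`. Up to the event that the orbit enters
`A ⊆ A^(w)` during the window `(m, m + G]`, `A ∩ N(1, m + r)` coincides with
`A ∩ N(1, m) ∩ N(m + G + 1, m + r)`. Entering `A^(w)` in that window depends only on coordinates
more than `g` after those of `A ∩ N(1, m - 2n)`, so by φ-mixing and stationarity its probability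
is at most `(G ℙ(A^(w)) + φ(g)) ℙ(A ∩ N(1, m - 2n))`. Across the same gap φ-mixing factorises
the second event up to `φ(g) ℙ(A ∩ N(1, m))`, and stationarity identifies
`ℙ(N(m + G + 1, m + r))` with `ℙ(τ_A > r)` up to `G ℙ(A)`. Since `n + g ≤ 2n + p_A`, the three
errors add up to `2 ε(A) ℙ(A ∩ {τ_A > k f_A - 2n})`. The gap fits because `f_A > 2n + p_A`
unless `2 (2n + p_A) ℙ(A^(w)) ≥ 1`, in which case the bound is trivial.

If some symbol of `A` is not measurable, every event `{τ_A > t}` has outer measure one.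
-/

@[simp] lemma shiftk_zero : shiftk (0 : ℤ) = (id : Omega 𝒞 → Omega 𝒞) := by
  funext x m; simp [shiftk]

lemma shiftk_shiftk (a b : ℤ) (x : Omega 𝒞) : shiftk a (shiftk b x) = shiftk (a + b) x := by
  funext m; simp [shiftk, add_assoc]

lemma cyl_eq_cylLast (n : ℕ) (a : ℕ → 𝒞) : cyl n a = cylLast n n a := by
  ext x; simp [cyl, cylLast]

lemma cyl_subset_cylLast (n w : ℕ) (a : ℕ → 𝒞) : cyl n a ⊆ cylLast n w a :=
  fun _ hx i _ hi => hx i hi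

def noHit (n : ℕ) (a : ℕ → 𝒞) (u v : ℕ) : Set (Omega 𝒞) :=
  ⋂ j ∈ Finset.Icc u v, (shiftk (j : ℤ) ⁻¹' cyl n a)ᶜ

lemma tauGT_antitone (A : Set (Omega 𝒞)) : Antitone (tauGT A) :=
  fun _ _ hst _ hx k hk hkt => hx k hk (hkt.trans hst)

section NoHit

variable {n : ℕ} {a : ℕ → 𝒞}

lemma mem_noHit {u v : ℕ} {x : Omega 𝒞} :
    x ∈ noHit n a u v ↔ ∀ j : ℕ, u ≤ j → j ≤ v → shiftk (j : ℤ) x ∉ cyl n a := by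
  simp [noHit, and_imp]

lemma noHit_subset_noHit {u v u' v' : ℕ} (hu : u' ≤ u) (hv : v ≤ v') :
    noHit n a u' v' ⊆ noHit n a u v := fun _ hx =>
  mem_noHit.2 fun j hj hj' => mem_noHit.1 hx j (hu.trans hj) (hj'.trans hv)

lemma tauGT_cyl_eq_noHit (t : ℝ) : tauGT (cyl n a) t = noHit n a 1 ⌊t⌋₊ := by
  ext x
  simp only [tauGT, mem_noHit, Set.mem_ofPred_eq]
  exact forall_congr' fun j => imp_congr_right fun hj => by
    rw [Nat.le_floor_iff' (by omega)]

lemma noHit_add_one_eq_preimage (t v : ℕ) :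
    noHit n a (t + 1) v = shiftk (t : ℤ) ⁻¹' noHit n a 1 (v - t) := by
  ext x
  simp only [Set.mem_preimage, mem_noHit, shiftk_shiftk]
  constructor
  · intro h j hj hjv
    exact_mod_cast h (j + t) (by omega) (by omega)
  · intro h j hj hjv
    have := h (j - t) (by omega) (by omega)
    rwa [show ((j - t : ℕ) : ℤ) + t = j by omega] at this

lemma noHit_diff_noHit_subset (u v w : ℕ) :
    noHit n a u v \ noHit n a u w ⊆ ⋃ j ∈ Finset.Icc (v + 1) w, shiftk (j : ℤ) ⁻¹' cyl n a := by
  rintro x ⟨hv, hw⟩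
  obtain ⟨j, hju, hjw, hj⟩ : ∃ j : ℕ, u ≤ j ∧ j ≤ w ∧ shiftk (j : ℤ) x ∈ cyl n a := by
    simpa [mem_noHit] using hw
  have : v < j := by_contra fun h => mem_noHit.1 hv j hju (by omega) hj
  exact Set.mem_biUnion (Finset.mem_Icc.2 ⟨this, hjw⟩) hj

lemma noHit_inter_noHit_diff_noHit_subset (u v d w : ℕ) :
    (noHit n a u v ∩ noHit n a (v + d + 1) w) \ noHit n a u w
      ⊆ ⋃ j ∈ Finset.Icc (v + 1) (v + d), shiftk (j : ℤ) ⁻¹' cyl n a := by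
  rintro x ⟨⟨hv, hd⟩, hw⟩
  obtain ⟨j, hju, hjw, hj⟩ : ∃ j : ℕ, u ≤ j ∧ j ≤ w ∧ shiftk (j : ℤ) x ∈ cyl n a := by
    simpa [mem_noHit] using hw
  have hvj : v < j := by_contra fun h => mem_noHit.1 hv j hju (by omega) hj
  have hjd : j ≤ v + d := by_contra fun h => mem_noHit.1 hd j (by omega) hjw hj
  exact Set.mem_biUnion (Finset.mem_Icc.2 ⟨hvj, hjd⟩) hj

end NoHit

section Measurability

variable [MeasurableSpace 𝒞] {n : ℕ} {a : ℕ → 𝒞}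

lemma coordAlg_le_pi (I : Set ℤ) : coordAlg (𝒞 := 𝒞) I ≤ MeasurableSpace.pi :=
  iSup₂_le fun i _ => (measurable_pi_apply i).comap_le

lemma measurableSet_coordAlg_coord {I : Set ℤ} {i : ℤ} (hi : i ∈ I) {S : Set 𝒞}
    (hS : MeasurableSet S) : MeasurableSet[coordAlg I] ((fun x : Omega 𝒞 => x i) ⁻¹' S) :=
  le_iSup₂ (f := fun i (_ : i ∈ I) =>
    MeasurableSpace.comap (fun x : Omega 𝒞 => x i) inferInstance) i hi _ ⟨S, hS, rfl⟩

lemma measurableSet_coordAlg_shiftk_cylLast (hsing : ∀ i < n, MeasurableSet ({a i} : Set 𝒞))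
    {w j : ℕ} {I : Set ℤ} (hI : ∀ i : ℕ, n - w ≤ i → i < n → (i : ℤ) + j ∈ I) :
    MeasurableSet[coordAlg I] (shiftk (j : ℤ) ⁻¹' cylLast n w a) := by
  have hcoord : shiftk (j : ℤ) ⁻¹' cylLast n w a
      = ⋂ i ∈ Finset.Ico (n - w) n, (fun x : Omega 𝒞 => x ((i : ℤ) + j)) ⁻¹' {a i} := by
    ext x; simp [cylLast, shiftk, and_imp]
  rw [hcoord]
  refine MeasurableSet.biInter (Finset.countable_toSet _) fun i hi => ?_
  obtain ⟨hwi, hin⟩ := Finset.mem_Ico.1 hi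
  exact measurableSet_coordAlg_coord (hI i hwi hin) (hsing i hin)

lemma measurableSet_coordAlg_cyl (hsing : ∀ i < n, MeasurableSet ({a i} : Set 𝒞)) {I : Set ℤ}
    (hI : ∀ i < n, (i : ℤ) ∈ I) : MeasurableSet[coordAlg I] (cyl n a) := by
  have := measurableSet_coordAlg_shiftk_cylLast hsing (w := n) (j := 0)
    fun i _ hi => by simpa using hI i hi
  simpa [← cyl_eq_cylLast] using this

lemma measurableSet_coordAlg_noHit (hsing : ∀ i < n, MeasurableSet ({a i} : Set 𝒞))
    {u v : ℕ} {I : Set ℤ} (hI : ∀ i < n, ∀ j : ℕ, u ≤ j → j ≤ v → (i : ℤ) + j ∈ I) :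
    MeasurableSet[coordAlg I] (noHit n a u v) := by
  refine MeasurableSet.biInter (Finset.countable_toSet _) fun j hj => ?_
  obtain ⟨huj, hjv⟩ := Finset.mem_Icc.1 hj
  rw [cyl_eq_cylLast]
  exact (measurableSet_coordAlg_shiftk_cylLast hsing fun i _ hi => hI i hi j huj hjv).compl

lemma measurableSet_cyl (hsing : ∀ i < n, MeasurableSet ({a i} : Set 𝒞)) :
    MeasurableSet (cyl n a) :=
  coordAlg_le_pi Set.univ _ (measurableSet_coordAlg_cyl hsing fun _ _ => Set.mem_univ _)

end Measurability

section Measures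

variable [MeasurableSpace 𝒞] {μ : Measure (Omega 𝒞)} {n : ℕ} {a : ℕ → 𝒞}

lemma Stationary.measure_preimage_shiftk (hstat : Stationary μ) (j : ℕ) (S : Set (Omega 𝒞)) :
    μ (shiftk (j : ℤ) ⁻¹' S) = μ S := by
  induction j with
  | zero => simp
  | succ j ih =>
    have hshift : shiftk ((j + 1 : ℕ) : ℤ) ⁻¹' S = shiftk 1 ⁻¹' (shiftk (j : ℤ) ⁻¹' S) := by
      ext x; simp [shiftk_shiftk]
    rw [hshift, hstat, ih]

lemma Stationary.measureReal_biUnion_shiftk_le (hstat : Stationary μ) (S : Set (Omega 𝒞))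
    (s : Finset ℕ) : μ.real (⋃ j ∈ s, shiftk (j : ℤ) ⁻¹' S) ≤ s.card * μ.real S := by
  refine (measureReal_biUnion_finset_le s _).trans_eq ?_
  simp [Measure.real, hstat.measure_preimage_shiftk]

lemma toReal_cond_apply {A : Set (Omega 𝒞)} (hA : MeasurableSet A) (S : Set (Omega 𝒞)) :
    (μ[|A] S).toReal = μ.real (A ∩ S) / μ.real A := by
  rw [cond_apply hA, ENNReal.toReal_mul, ENNReal.toReal_inv, div_eq_inv_mul]
  rfl

lemma Stationary.measureReal_noHit_add_one (hstat : Stationary μ) (t v : ℕ) :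
    μ.real (noHit n a (t + 1) v) = μ.real (noHit n a 1 (v - t)) := by
  rw [noHit_add_one_eq_preimage, Measure.real, hstat.measure_preimage_shiftk, Measure.real]

lemma IsPhiMixing.nonneg [IsProbabilityMeasure μ] {φ : ℕ → ℝ} (hmix : IsPhiMixing μ φ) (l : ℕ) :
    0 ≤ φ l := by
  simpa using hmix.2 l 0 Set.univ ∅ MeasurableSet.univ (by simp)
    (@MeasurableSet.empty _ (coordAlg _))

variable [IsFiniteMeasure μ]

lemma Stationary.abs_measureReal_noHit_sub_le (hstat : Stationary μ) {v w : ℕ} (hvw : v ≤ w) :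
    |μ.real (noHit n a 1 v) - μ.real (noHit n a 1 w)| ≤ (w - v : ℕ) * μ.real (cyl n a) := by
  rw [abs_of_nonneg (sub_nonneg.2 (measureReal_mono (noHit_subset_noHit le_rfl hvw)
    (measure_ne_top μ _)))]
  calc μ.real (noHit n a 1 v) - μ.real (noHit n a 1 w)
      ≤ μ.real (noHit n a 1 v \ noHit n a 1 w) := le_measureReal_sdiff
    _ ≤ μ.real (⋃ j ∈ Finset.Icc (v + 1) w, shiftk (j : ℤ) ⁻¹' cyl n a) :=
      measureReal_mono (noHit_diff_noHit_subset 1 v w) (measure_ne_top μ _)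
    _ ≤ (w - v : ℕ) * μ.real (cyl n a) := by
      simpa using hstat.measureReal_biUnion_shiftk_le (cyl n a) (Finset.Icc (v + 1) w)

variable {φ : ℕ → ℝ}

lemma IsPhiMixing.abs_measureReal_inter_sub_le (hmix : IsPhiMixing μ φ) {l k : ℕ}
    {B C : Set (Omega 𝒞)} (hB : MeasurableSet[coordAlg (Set.Icc (0 : ℤ) (k : ℤ))] B)
    (hC : MeasurableSet[coordAlg {i : ℤ | (k : ℤ) + (l : ℤ) + 1 ≤ i}] C) :
    |μ.real (B ∩ C) - μ.real B * μ.real C| ≤ φ l * μ.real B := by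
  rcases eq_or_ne (μ B) 0 with hB0 | hB0
  · have hBC : μ.real (B ∩ C) = 0 := measureReal_mono_null Set.inter_subset_left
      (by simp [Measure.real, hB0])
    have hB' : μ.real B = 0 := by simp [Measure.real, hB0]
    simp [hBC, hB']
  have hPB : 0 < μ.real B := ENNReal.toReal_pos hB0 (measure_ne_top μ B)
  have hcond := hmix.2 l k B C hB (pos_iff_ne_zero.2 hB0) hC
  rw [toReal_cond_apply (coordAlg_le_pi _ _ hB)] at hcond
  calc |μ.real (B ∩ C) - μ.real B * μ.real C|
      = μ.real B * |μ.real (B ∩ C) / μ.real B - μ.real C| := by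
        rw [← abs_of_pos hPB, ← abs_mul, abs_of_pos hPB, mul_sub, mul_div_cancel₀ _ hPB.ne']
    _ ≤ φ l * μ.real B := by rw [mul_comm]; exact mul_le_mul_of_nonneg_right hcond hPB.le

end Measures

section Factorization

variable [MeasurableSpace 𝒞] {μ : Measure (Omega 𝒞)} [IsProbabilityMeasure μ] {φ : ℕ → ℝ}
  {n : ℕ} {a : ℕ → 𝒞}

lemma measureReal_inter_iUnion_shiftk_cylLast_le (hstat : Stationary μ) (hmix : IsPhiMixing μ φ)
    (hsing : ∀ i < n, MeasurableSet ({a i} : Set 𝒞)) {w g m m₂ : ℕ} (hwg : w + g ≤ n)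
    (hm : m₂ + n ≤ m) :
    μ.real (cyl n a ∩ noHit n a 1 m₂ ∩
        ⋃ j ∈ Finset.Icc (m + 1) (m + (n + g)), shiftk (j : ℤ) ⁻¹' cylLast n w a)
      ≤ μ.real (cyl n a ∩ noHit n a 1 m₂) * ((n + g : ℕ) * μ.real (cylLast n w a) + φ g) := by
  have hpast : MeasurableSet[coordAlg (Set.Icc (0 : ℤ) ((m₂ + n : ℕ) : ℤ))]
      (cyl n a ∩ noHit n a 1 m₂) :=
    MeasurableSet.inter (measurableSet_coordAlg_cyl hsing fun i hi => ⟨by positivity, by omega⟩)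
      (measurableSet_coordAlg_noHit hsing fun i hi j _ hj => ⟨by positivity, by omega⟩)
  have hfuture : MeasurableSet[coordAlg {i : ℤ | ((m₂ + n : ℕ) : ℤ) + (g : ℤ) + 1 ≤ i}]
      (⋃ j ∈ Finset.Icc (m + 1) (m + (n + g)), shiftk (j : ℤ) ⁻¹' cylLast n w a) :=
    MeasurableSet.biUnion (Finset.countable_toSet _) fun j hj =>
      measurableSet_coordAlg_shiftk_cylLast hsing fun i hi _ => by
        have := (Finset.mem_Icc.1 hj).1
        simp only [Set.mem_ofPred_eq]
        omega
  have hmixing := (abs_le.1 (hmix.abs_measureReal_inter_sub_le hpast hfuture)).2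
  have hwindow := hstat.measureReal_biUnion_shiftk_le (cylLast n w a)
    (Finset.Icc (m + 1) (m + (n + g)))
  rw [Nat.card_Icc, show m + (n + g) + 1 - (m + 1) = n + g by omega] at hwindow
  calc _ ≤ μ.real (cyl n a ∩ noHit n a 1 m₂) * μ.real
          (⋃ j ∈ Finset.Icc (m + 1) (m + (n + g)), shiftk (j : ℤ) ⁻¹' cylLast n w a)
        + φ g * μ.real (cyl n a ∩ noHit n a 1 m₂) := by linarith
    _ ≤ μ.real (cyl n a ∩ noHit n a 1 m₂) * ((n + g : ℕ) * μ.real (cylLast n w a))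
        + φ g * μ.real (cyl n a ∩ noHit n a 1 m₂) := by gcongr
    _ = _ := by ring

lemma abs_measureReal_noHit_sub_measureReal_gap_le (hstat : Stationary μ)
    (hmix : IsPhiMixing μ φ) (hsing : ∀ i < n, MeasurableSet ({a i} : Set 𝒞)) {w g m m₂ v : ℕ}
    (hwg : w + g ≤ n) (hm : m₂ + n ≤ m) (hmv : m ≤ v) :
    |μ.real (cyl n a ∩ noHit n a 1 v)
        - μ.real (cyl n a ∩ noHit n a 1 m ∩ noHit n a (m + (n + g) + 1) v)|
      ≤ μ.real (cyl n a ∩ noHit n a 1 m₂) * ((n + g : ℕ) * μ.real (cylLast n w a) + φ g) := by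
  have hsub : cyl n a ∩ noHit n a 1 v
      ⊆ cyl n a ∩ noHit n a 1 m ∩ noHit n a (m + (n + g) + 1) v := fun x ⟨hA, hx⟩ =>
    ⟨⟨hA, noHit_subset_noHit le_rfl hmv hx⟩, noHit_subset_noHit (by omega) le_rfl hx⟩
  rw [abs_sub_comm, abs_of_nonneg (sub_nonneg.2 (measureReal_mono hsub (measure_ne_top μ _)))]
  calc _ ≤ μ.real ((cyl n a ∩ noHit n a 1 m ∩ noHit n a (m + (n + g) + 1) v)
          \ (cyl n a ∩ noHit n a 1 v)) := le_measureReal_sdiff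
    _ ≤ μ.real (cyl n a ∩ noHit n a 1 m₂ ∩
          ⋃ j ∈ Finset.Icc (m + 1) (m + (n + g)), shiftk (j : ℤ) ⁻¹' cylLast n w a) := by
      refine measureReal_mono ?_ (measure_ne_top μ _)
      rintro x ⟨⟨⟨hA, hnear⟩, hfar⟩, hnot⟩
      have hhit := noHit_inter_noHit_diff_noHit_subset 1 m (n + g) v
        ⟨⟨hnear, hfar⟩, fun h => hnot ⟨hA, h⟩⟩
      exact ⟨⟨hA, noHit_subset_noHit le_rfl (by omega) hnear⟩,
        Set.iUnion₂_mono (fun j _ => Set.preimage_mono (cyl_subset_cylLast n w a)) hhit⟩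
    _ ≤ _ := measureReal_inter_iUnion_shiftk_cylLast_le hstat hmix hsing hwg hm

lemma IsPhiMixing.abs_measureReal_gap_sub_le (hmix : IsPhiMixing μ φ) (hstat : Stationary μ)
    (hsing : ∀ i < n, MeasurableSet ({a i} : Set 𝒞)) (m g v : ℕ) :
    |μ.real (cyl n a ∩ noHit n a 1 m ∩ noHit n a (m + (n + g) + 1) v)
        - μ.real (cyl n a ∩ noHit n a 1 m) * μ.real (noHit n a 1 (v - (m + (n + g))))|
      ≤ φ g * μ.real (cyl n a ∩ noHit n a 1 m) := by
  rw [← hstat.measureReal_noHit_add_one]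
  refine hmix.abs_measureReal_inter_sub_le (k := m + n) ?_ ?_
  · exact MeasurableSet.inter
      (measurableSet_coordAlg_cyl hsing fun i hi => ⟨by positivity, by omega⟩)
      (measurableSet_coordAlg_noHit hsing fun i hi j _ hj => ⟨by positivity, by omega⟩)
  · exact measurableSet_coordAlg_noHit hsing fun i hi j hj _ => by
      simp only [Set.mem_ofPred_eq]
      omega

theorem abs_measureReal_cyl_inter_noHit_sub_le (hstat : Stationary μ) (hmix : IsPhiMixing μ φ)
    (hsing : ∀ i < n, MeasurableSet ({a i} : Set 𝒞)) {w g m m₂ R s : ℕ} (hwg : w + g ≤ n)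
    (hm : m₂ + n ≤ m) (hRs : R ≤ s) (hsR : s ≤ R + n) :
    |μ.real (cyl n a ∩ noHit n a 1 (m + s))
        - μ.real (cyl n a ∩ noHit n a 1 m) * μ.real (noHit n a 1 R)|
      ≤ 2 * ((n + g : ℕ) * μ.real (cylLast n w a) + φ g)
          * μ.real (cyl n a ∩ noHit n a 1 m₂) := by
  have hgap := abs_measureReal_noHit_sub_measureReal_gap_le hstat hmix hsing hwg hm
    (v := m + s) (by omega)
  have hmixing := hmix.abs_measureReal_gap_sub_le hstat hsing m g (m + s)
  rw [Nat.add_sub_add_left] at hmixing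
  have hreturn := hstat.abs_measureReal_noHit_sub_le (n := n) (a := a) (v := s - (n + g))
    (w := R) (by omega)
  have hbM : μ.real (cyl n a ∩ noHit n a 1 m) ≤ μ.real (cyl n a ∩ noHit n a 1 m₂) :=
    measureReal_mono (Set.inter_subset_inter_right _ (noHit_subset_noHit le_rfl (by omega)))
      (measure_ne_top μ _)
  have hAδ : μ.real (cyl n a) ≤ μ.real (cylLast n w a) :=
    measureReal_mono (cyl_subset_cylLast n w a) (measure_ne_top μ _)
  have hb : 0 ≤ μ.real (cyl n a ∩ noHit n a 1 m) := measureReal_nonneg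
  have hφ := hmix.nonneg g
  set G := n + g
  set δ := μ.real (cylLast n w a)
  set M := μ.real (cyl n a ∩ noHit n a 1 m₂)
  set b := μ.real (cyl n a ∩ noHit n a 1 m)
  set D := μ.real (cyl n a ∩ noHit n a 1 m ∩ noHit n a (m + G + 1) (m + s))
  calc _ = |(μ.real (cyl n a ∩ noHit n a 1 (m + s)) - D)
          + (D - b * μ.real (noHit n a 1 (s - G)))
          + b * (μ.real (noHit n a 1 (s - G)) - μ.real (noHit n a 1 R))| := by
        congr 1; ring
    _ ≤ |μ.real (cyl n a ∩ noHit n a 1 (m + s)) - D|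
          + |D - b * μ.real (noHit n a 1 (s - G))|
          + b * |μ.real (noHit n a 1 (s - G)) - μ.real (noHit n a 1 R)| := by
        refine (abs_add_three _ _ _).trans_eq ?_
        rw [abs_mul, abs_of_nonneg hb]
    _ ≤ M * (G * δ + φ g) + φ g * M + M * (G * δ) := by
        refine add_le_add_three hgap (hmixing.trans (by gcongr)) ?_
        refine mul_le_mul hbM (hreturn.trans ?_) (abs_nonneg _) measureReal_nonneg
        gcongr
        omega
    _ = 2 * (G * δ + φ g) * M := by ring

theorem abs_cond_tauGT_add_sub_le (hstat : Stationary μ) (hmix : IsPhiMixing μ φ)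
    (hn : 1 ≤ n) (hsing : ∀ i < n, MeasurableSet ({a i} : Set 𝒞)) (hA : 0 < μ (cyl n a))
    {w g : ℕ} (hwg : w + g ≤ n) {t r : ℝ} (ht : 2 * n ≤ t) (hr : 0 ≤ r) :
    |(μ[|cyl n a] (tauGT (cyl n a) (t + r))).toReal
        - (μ[|cyl n a] (tauGT (cyl n a) t)).toReal * (μ (tauGT (cyl n a) r)).toReal|
      ≤ 2 * ((n + g : ℕ) * μ.real (cylLast n w a) + φ g)
          * (μ[|cyl n a] (tauGT (cyl n a) (t - 2 * n))).toReal := by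
  have ht0 : 0 ≤ t := le_trans (by positivity) ht
  have hlow : ⌊t⌋₊ + ⌊r⌋₊ ≤ ⌊t + r⌋₊ := Nat.le_floor (by
    push_cast; linarith [Nat.floor_le ht0, Nat.floor_le hr])
  have hup : ⌊t + r⌋₊ ≤ ⌊t⌋₊ + ⌊r⌋₊ + 1 := Nat.lt_succ_iff.1 <| (Nat.floor_lt (by positivity)).2 (by
    push_cast; linarith [Nat.lt_floor_add_one t, Nat.lt_floor_add_one r])
  have hgap : ⌊t - 2 * n⌋₊ + n ≤ ⌊t⌋₊ := by
    have h2n : 2 * n ≤ ⌊t⌋₊ := Nat.le_floor (by push_cast; linarith)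
    rw [show (2 : ℝ) * n = ((2 * n : ℕ) : ℝ) by push_cast; ring, Nat.floor_sub_natCast]
    omega
  have hcore := abs_measureReal_cyl_inter_noHit_sub_le (R := ⌊r⌋₊) (s := ⌊t + r⌋₊ - ⌊t⌋₊)
    hstat hmix hsing hwg hgap (by omega) (by omega)
  rw [Nat.add_sub_cancel' (by omega)] at hcore
  have hP : 0 < μ.real (cyl n a) := ENNReal.toReal_pos hA.ne' (measure_ne_top μ _)
  simp only [tauGT_cyl_eq_noHit, toReal_cond_apply (measurableSet_cyl hsing)]
  rw [div_mul_eq_mul_div, ← sub_div, abs_div, abs_of_pos hP, mul_div_assoc']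
  exact div_le_div_of_nonneg_right hcore hP.le

end Factorization

section NonMeasurableSymbol

lemma mem_iff_of_mem_measurableAtom {β : Type*} [MeasurableSpace β] {x y : β}
    (h : y ∈ measurableAtom x) {S : Set β} (hS : MeasurableSet S) : y ∈ S ↔ x ∈ S :=
  ⟨fun hy => by_contra fun hx => mem_of_mem_measurableAtom h hS.compl hx hy,
    mem_of_mem_measurableAtom h hS⟩

lemma exists_ne_mem_measurableAtom {β : Type*} [MeasurableSpace β] [Countable β] {x : β}
    (hx : ¬ MeasurableSet ({x} : Set β)) : ∃ y ≠ x, y ∈ measurableAtom x := by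
  by_contra! h
  refine hx ((Set.eq_singleton_iff_unique_mem.2 ⟨mem_measurableAtom_self x, fun y hy => ?_⟩) ▸
    MeasurableSet.measurableAtom_of_countable x)
  exact by_contra fun hne => h y hne hy

lemma preimage_comp_left_eq_self {ι β : Type*} [MeasurableSpace β] {f : β → β}
    (hf : ∀ b (S : Set β), MeasurableSet S → (f b ∈ S ↔ b ∈ S)) {T : Set (ι → β)}
    (hT : MeasurableSet T) : (f ∘ ·) ⁻¹' T = T := by
  suffices h : MeasurableSpace.pi ≤ MeasurableSpace.invariants (f ∘ · : (ι → β) → (ι → β)) from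
    (h T hT).2
  refine iSup_le fun i => ?_
  rintro _ ⟨S, hS, rfl⟩
  exact ⟨measurable_pi_apply i hS, Set.ext fun x => hf (x i) S hS⟩

lemma measure_eq_measure_univ_of_forall_superset {α : Type*} [MeasurableSpace α]
    (μ : Measure α) {S : Set α} (h : ∀ T, MeasurableSet T → S ⊆ T → T = Set.univ) :
    μ S = μ Set.univ := by
  rw [← measure_toMeasurable S, h _ (measurableSet_toMeasurable μ S) (subset_toMeasurable μ S)]

variable [MeasurableSpace 𝒞] [Countable 𝒞] {n : ℕ} {a : ℕ → 𝒞}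

/-- Recolouring the symbol `a i` as a symbol `c` that no measurable set separates from it fixes
every measurable set and moves every point into `{τ_A > t}`. -/
lemma eq_univ_of_tauGT_subset {i : ℕ} (hi : i < n) (ha : ¬ MeasurableSet ({a i} : Set 𝒞))
    (t : ℝ) {T : Set (Omega 𝒞)} (hT : MeasurableSet T) (hsub : tauGT (cyl n a) t ⊆ T) :
    T = Set.univ := by
  classical
  obtain ⟨c, hc, hcatom⟩ := exists_ne_mem_measurableAtom ha
  set f : 𝒞 → 𝒞 := fun b => if b = a i then c else b
  have hf_ne : ∀ b, f b ≠ a i := fun b => by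
    by_cases hb : b = a i <;> simp [f, hb, hc]
  have hf : ∀ b (S : Set 𝒞), MeasurableSet S → (f b ∈ S ↔ b ∈ S) := fun b S hS => by
    by_cases hb : b = a i
    · simpa [f, hb] using mem_iff_of_mem_measurableAtom hcatom hS
    · simp [f, hb]
  refine Set.eq_univ_of_forall fun x => ?_
  rw [← preimage_comp_left_eq_self hf hT]
  exact hsub fun k _ _ hk => hf_ne _ (hk i hi)

lemma measure_tauGT_of_not_measurableSet {i : ℕ} (hi : i < n)
    (ha : ¬ MeasurableSet ({a i} : Set 𝒞)) (μ : Measure (Omega 𝒞)) [IsProbabilityMeasure μ]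
    (t : ℝ) : μ (tauGT (cyl n a) t) = 1 := by
  rw [measure_eq_measure_univ_of_forall_superset μ fun _ => eq_univ_of_tauGT_subset hi ha t,
    measure_univ]

end NonMeasurableSymbol

lemma epsA_nonneg [MeasurableSpace 𝒞] {μ : Measure (Omega 𝒞)} [IsProbabilityMeasure μ]
    {φ : ℕ → ℝ} (hmix : IsPhiMixing μ φ) (n : ℕ) (a : ℕ → 𝒞) : 0 ≤ epsA μ φ n a :=
  Finset.le_inf' _ _ fun _ _ => add_nonneg (by positivity) (hmix.nonneg _)

lemma exists_epsA_eq [MeasurableSpace 𝒞] (μ : Measure (Omega 𝒞)) (φ : ℕ → ℝ) (n : ℕ)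
    (a : ℕ → 𝒞) : ∃ w ≤ nA n (cyl n a), epsA μ φ n a =
      ((2 * n + period n (cyl n a) : ℕ) : ℝ) * μ.real (cylLast n w a) + φ (nA n (cyl n a) - w) := by
  obtain ⟨w, hw, hε⟩ := Finset.exists_mem_eq_inf' Finset.nonempty_Iic fun w =>
    ((2 * n + period n (cyl n a) : ℕ) : ℝ) * μ.real (cylLast n w a) + φ (nA n (cyl n a) - w)
  exact ⟨w, Finset.mem_Iic.1 hw, hε⟩

lemma nA_le (n : ℕ) (A : Set (Omega 𝒞)) : nA n A ≤ n := by
  unfold nA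
  split_ifs with h
  · exact (Nat.sInf_le h.some_mem).trans h.some_mem.2.1.le
  · exact le_rfl

lemma lt_one_div_two_mul {c p d : ℝ} (hc : 0 ≤ c) (hp : 0 < p) (hpd : p ≤ d) (h : 2 * c * d < 1) :
    c < 1 / (2 * p) := by
  rw [lt_div_iff₀ (by positivity)]
  nlinarith [mul_le_mul_of_nonneg_left hpd hc]

lemma abs_cond_tauGT_add_sub_le_cond_tauGT [MeasurableSpace 𝒞] {μ : Measure (Omega 𝒞)}
    [IsProbabilityMeasure μ] (A : Set (Omega 𝒞)) {s t r : ℝ} (hst : s ≤ t) (hr : 0 ≤ r) :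
    |(μ[|A] (tauGT A (t + r))).toReal - (μ[|A] (tauGT A t)).toReal * (μ (tauGT A r)).toReal|
      ≤ (μ[|A] (tauGT A s)).toReal := by
  have hcond : ∀ {u}, s ≤ u → (μ[|A] (tauGT A u)).toReal ≤ (μ[|A] (tauGT A s)).toReal :=
    fun hu => measureReal_mono (tauGT_antitone A hu)
  refine abs_sub_le_of_nonneg_of_le toReal_nonneg (hcond (by linarith)) (by positivity) ?_
  exact (mul_le_of_le_one_right toReal_nonneg measureReal_le_one).trans (hcond hst)

theorem hitting_return_factorization_general [Fintype 𝒞] [MeasurableSpace 𝒞]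
    (μ : MeasureTheory.Measure (Omega 𝒞)) [IsProbabilityMeasure μ] (hstat : Stationary μ)
    (φ : ℕ → ℝ) (hmix : IsPhiMixing μ φ)
    (n : ℕ) (hn : 1 ≤ n) (a : ℕ → 𝒞) (hA : 0 < μ (cyl n a))
    (k : ℕ) (hk : 1 ≤ k) (fA : ℝ) (hfA : fA = 1 / (2 * (μ (cyl n a)).toReal))
    (r : ℝ) (hr0 : 0 ≤ r) :
    |(μ[|cyl n a] (tauGT (cyl n a) ((k : ℝ) * fA + r))).toReal
        - (μ[|cyl n a] (tauGT (cyl n a) ((k : ℝ) * fA))).toReal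
            * (μ (tauGT (cyl n a) r)).toReal|
      ≤ 2 * epsA μ φ n a
          * (μ[|cyl n a] (tauGT (cyl n a) ((k : ℝ) * fA - 2 * n))).toReal := by
  by_cases hsing : ∀ i < n, MeasurableSet ({a i} : Set 𝒞)
  swap
  · push Not at hsing
    obtain ⟨i, hi, ha⟩ := hsing
    have := cond_isProbabilityMeasure (μ := μ) hA.ne'
    simp only [measure_tauGT_of_not_measurableSet hi ha, toReal_one, mul_one, sub_self, abs_zero]
    exact mul_nonneg zero_le_two (epsA_nonneg hmix n a)
  obtain ⟨w, hw, hεw⟩ := exists_epsA_eq μ φ n a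
  have hwn : w + (nA n (cyl n a) - w) ≤ n := by have := nA_le n (cyl n a); omega
  by_cases hbig : 1 ≤ 2 * ((2 * n + period n (cyl n a) : ℕ) : ℝ) * μ.real (cylLast n w a)
  · refine (abs_cond_tauGT_add_sub_le_cond_tauGT _ (by linarith) hr0).trans
      (le_mul_of_one_le_left toReal_nonneg ?_)
    rw [hεw]
    linarith [hmix.nonneg (nA n (cyl n a) - w)]
  have ht : 2 * n ≤ (k : ℝ) * fA := by
    have hfA_gt : ((2 * n + period n (cyl n a) : ℕ) : ℝ) < fA := hfA ▸
      lt_one_div_two_mul (Nat.cast_nonneg _) (ENNReal.toReal_pos hA.ne' (measure_ne_top μ _))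
        (measureReal_mono (cyl_subset_cylLast n w a)) (not_le.1 hbig)
    push_cast at hfA_gt
    nlinarith [(Nat.one_le_cast.2 hk : (1 : ℝ) ≤ k)]
  refine (abs_cond_tauGT_add_sub_le hstat hmix hn hsing hA hwn ht hr0).trans ?_
  rw [hεw]
  gcongr 2 * (?_ * _ + _) * _
  exact_mod_cast (by omega : n + (nA n (cyl n a) - w) ≤ 2 * n + period n (cyl n a))

/-- **Proposition (a).**  With `f_A = 1/(2ℙ(A))`: for every integer `k ≥ 1` and
`0 ≤ r ≤ f_A`,
`|ℙ_A(τ_A > k f_A + r) - ℙ_A(τ_A > k f_A) ℙ(τ_A > r)| ≤ 2 ε(A) ℙ_A(τ_A > k f_A - 2n)`. -/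
theorem hitting_return_factorization [Fintype 𝒞] [Nonempty 𝒞] [MeasurableSpace 𝒞]
    (μ : MeasureTheory.Measure (Omega 𝒞)) [IsProbabilityMeasure μ] (hstat : Stationary μ)
    (φ : ℕ → ℝ) (hmix : IsPhiMixing μ φ)
    (n : ℕ) (hn : 1 ≤ n) (a : ℕ → 𝒞) (hA : 0 < μ (cyl n a))
    (k : ℕ) (hk : 1 ≤ k) (fA : ℝ) (hfA : fA = 1 / (2 * (μ (cyl n a)).toReal))
    (r : ℝ) (hr0 : 0 ≤ r) (hr : r ≤ fA) :
    |(μ[|cyl n a] (tauGT (cyl n a) ((k : ℝ) * fA + r))).toReal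
        - (μ[|cyl n a] (tauGT (cyl n a) ((k : ℝ) * fA))).toReal
            * (μ (tauGT (cyl n a) r)).toReal|
      ≤ 2 * epsA μ φ n a
          * (μ[|cyl n a] (tauGT (cyl n a) ((k : ℝ) * fA - 2 * n))).toReal :=
  hitting_return_factorization_general μ hstat φ hmix n hn a hA k hk fA hfA r hr0

end ReturnTimes
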